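/- Correctness of the spatial translation of counting stars: if e is an environment for the language L, C is a counting star formula in language L, and m ∈ {{1}, {2}, {1,2}}, then ⟦C⟧e = ⟦str_m(C)⟧e^m, i.e. C is true in e iff its spatial translation str_m(C) is true in the marked extension e^m. -/

import Mathlib

/-- An environment (model with variable assignment): interprets unary predicate
symbols from `𝒜`, binary predicate symbols from `ℱ`, and variables from `V`
over the domain `D`. -/
structure Env (𝒜 ℱ V D : Type) where
  un : 𝒜 → D → Prop
  bin : ℱ → D → D → Prop
  var : V → D

variable {𝒜 ℱ V D : Type}

/-- `e.Split e₁ e₂`: the relations of `e` split as a disjoint union into `e₁`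
and `e₂`, and the variable assignments agree with those of `e`. -/
def Env.Split (e e₁ e₂ : Env 𝒜 ℱ V D) : Prop :=
  e₁.var = e.var ∧ e₂.var = e.var ∧
  (∀ A d, (e.un A d ↔ (e₁.un A d ∨ e₂.un A d)) ∧ ¬(e₁.un A d ∧ e₂.un A d)) ∧
  (∀ f d₁ d₂, (e.bin f d₁ d₂ ↔ (e₁.bin f d₁ d₂ ∨ e₂.bin f d₁ d₂)) ∧
      ¬(e₁.bin f d₁ d₂ ∧ e₂.bin f d₁ d₂))

/-- Spatial conjunction of predicates on environments. -/
def spand (P Q : Env 𝒜 ℱ V D → Prop) (e : Env 𝒜 ℱ V D) : Prop :=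
  ∃ e₁ e₂, e.Split e₁ e₂ ∧ P e₁ ∧ Q e₂

/-! ## Syntax and semantics of first-order logic with counting quantifiers -/

/-- Counting quantifier specifications: `∃^{=k}` and `∃^{≥k}`. -/
inductive CQ : Type where
  | exact : ℕ → CQ
  | atLeast : ℕ → CQ
deriving DecidableEq

/-- A counting quantifier specification is satisfied by a cardinality `c`. -/
def CQ.sat : CQ → ℕ → Prop
  | .exact k, c => c = k
  | .atLeast k, c => k ≤ c

/-- `c ∈ C_{k+1}`: `c` is `=i` for some `i ≤ k`, or `≥ k+1`. -/
def CQ.degLE (k : ℕ) : CQ → Prop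
  | .exact i => i ≤ k
  | .atLeast i => i = k + 1

/-- Formulas of first-order predicate calculus with equality and counting
quantifiers, over unary symbols `𝒜`, binary symbols `ℱ`, variables `V`. -/
inductive Fml (𝒜 ℱ V : Type) : Type where
  | un : 𝒜 → V → Fml 𝒜 ℱ V
  | bin : ℱ → V → V → Fml 𝒜 ℱ V
  | eq : V → V → Fml 𝒜 ℱ V
  | fls : Fml 𝒜 ℱ V
  | and : Fml 𝒜 ℱ V → Fml 𝒜 ℱ V → Fml 𝒜 ℱ V
  | or : Fml 𝒜 ℱ V → Fml 𝒜 ℱ V → Fml 𝒜 ℱ V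
  | not : Fml 𝒜 ℱ V → Fml 𝒜 ℱ V
  | cnt : CQ → V → Fml 𝒜 ℱ V → Fml 𝒜 ℱ V

/-- Update the value of a variable in an environment. -/
def Env.updVar [DecidableEq V] (e : Env 𝒜 ℱ V D) (v : V) (d : D) : Env 𝒜 ℱ V D :=
  { e with var := Function.update e.var v d }

/-- Satisfaction of a formula in an environment. -/
def Fml.Sat [DecidableEq V] : Fml 𝒜 ℱ V → Env 𝒜 ℱ V D → Prop
  | .un A v, e => e.un A (e.var v)
  | .bin f v w, e => e.bin f (e.var v) (e.var w)
  | .eq v w, e => e.var v = e.var w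
  | .fls, _ => False
  | .and F G, e => F.Sat e ∧ G.Sat e
  | .or F G, e => F.Sat e ∨ G.Sat e
  | .not F, e => ¬ F.Sat e
  | .cnt c v F, e => c.sat {d : D | F.Sat (e.updVar v d)}.ncard

/-- Quantifier depth; each counting quantifier counts as one quantifier. -/
def Fml.qdepth : Fml 𝒜 ℱ V → ℕ
  | .un _ _ => 0
  | .bin _ _ _ => 0
  | .eq _ _ => 0
  | .fls => 0
  | .and F G => max F.qdepth G.qdepth
  | .or F G => max F.qdepth G.qdepth
  | .not F => F.qdepth
  | .cnt _ _ F => F.qdepth + 1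

/-- Free variables of a formula. -/
def Fml.fv [DecidableEq V] : Fml 𝒜 ℱ V → Finset V
  | .un _ v => {v}
  | .bin _ v w => {v, w}
  | .eq v w => {v, w}
  | .fls => ∅
  | .and F G => F.fv ∪ G.fv
  | .or F G => F.fv ∪ G.fv
  | .not F => F.fv
  | .cnt _ v F => F.fv.erase v

/-- `F.DegLE k`: `F` has counting degree at most `k`, i.e. all counting
quantifiers of `F` are `∃^c` with `c ∈ C_{k+1}`. -/
def Fml.DegLE (k : ℕ) : Fml 𝒜 ℱ V → Prop
  | .un _ _ => True
  | .bin _ _ _ => True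
  | .eq _ _ => True
  | .fls => True
  | .and F G => F.DegLE k ∧ G.DegLE k
  | .or F G => F.DegLE k ∧ G.DegLE k
  | .not F => F.DegLE k
  | .cnt c _ F => c.degLE k ∧ F.DegLE k

/-! ## Atomic formulas, complete atomic types -/

/-- Atomic formulas over unary symbols `𝒜`, binary symbols `ℱ`, variables `V`
(including equality atoms). -/
inductive Atom (𝒜 ℱ V : Type) : Type where
  | un : 𝒜 → V → Atom 𝒜 ℱ V
  | bin : ℱ → V → V → Atom 𝒜 ℱ V
  | eq : V → V → Atom 𝒜 ℱ V
deriving DecidableEq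

def Atom.toFml : Atom 𝒜 ℱ V → Fml 𝒜 ℱ V
  | .un A v => .un A v
  | .bin f v w => .bin f v w
  | .eq v w => .eq v w

/-- The variables occurring in an atomic formula. -/
def Atom.varset [DecidableEq V] : Atom 𝒜 ℱ V → Finset V
  | .un _ v => {v}
  | .bin _ v w => {v, w}
  | .eq v w => {v, w}

/-- Whether an atom is an equality atom. -/
def Atom.isEq : Atom 𝒜 ℱ V → Bool
  | .eq _ _ => true
  | _ => false

def atomEquiv (𝒜 ℱ V : Type) :
    Atom 𝒜 ℱ V ≃ ((𝒜 × V) ⊕ ((ℱ × V × V) ⊕ (V × V))) where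
  toFun a := match a with
    | .un A v => Sum.inl (A, v)
    | .bin f v w => Sum.inr (Sum.inl (f, v, w))
    | .eq v w => Sum.inr (Sum.inr (v, w))
  invFun s := match s with
    | Sum.inl (A, v) => .un A v
    | Sum.inr (Sum.inl (f, v, w)) => .bin f v w
    | Sum.inr (Sum.inr (v, w)) => .eq v w
  left_inv a := by cases a <;> rfl
  right_inv s := by rcases s with ⟨A, v⟩ | ⟨f, v, w⟩ | ⟨v, w⟩ <;> rfl

instance [Fintype 𝒜] [Fintype ℱ] [Fintype V] : Fintype (Atom 𝒜 ℱ V) :=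
  Fintype.ofEquiv _ (atomEquiv 𝒜 ℱ V).symm

/-- Conjunction of a list of formulas (empty conjunction is `¬⊥`, i.e. true). -/
def listConj (l : List (Fml 𝒜 ℱ V)) : Fml 𝒜 ℱ V := l.foldr .and (.not .fls)

/-- Disjunction of a list of formulas (empty disjunction is `⊥`). -/
def listDisj (l : List (Fml 𝒜 ℱ V)) : Fml 𝒜 ℱ V := l.foldr .or .fls

/-- Conjunction of a list of atoms, each taken positively or negatively
according to the sign assignment `σ`. -/
def signedConj (l : List (Atom 𝒜 ℱ V)) (σ : Atom 𝒜 ℱ V → Bool) : Fml 𝒜 ℱ V :=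
  listConj (l.map fun a => if σ a then a.toFml else .not a.toFml)

section AtomicTypes

variable [Fintype 𝒜] [DecidableEq 𝒜] [Fintype ℱ] [DecidableEq ℱ]
  [Fintype V] [DecidableEq V]

/-- The list of all atomic formulas whose variables are among `xs`. -/
noncomputable def atomsOn (𝒜 ℱ : Type) [Fintype 𝒜] [DecidableEq 𝒜] [Fintype ℱ] [DecidableEq ℱ]
    {V : Type} [Fintype V] [DecidableEq V] (xs : Finset V) : List (Atom 𝒜 ℱ V) :=
  (Finset.univ : Finset (Atom 𝒜 ℱ V)).toList.filter fun a => decide (a.varset ⊆ xs)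

/-- The complete atomic type (CAT) formula with free variables `{x₁,…,xₙ}`
(the whole of `V`) determined by a sign assignment `σ`: the conjunction
containing, for each atomic formula `C` over `V`, the conjunct `C` if
`σ C = true` and the conjunct `¬C` otherwise. -/
noncomputable def catFml (σ : Atom 𝒜 ℱ V → Bool) : Fml 𝒜 ℱ V :=
  signedConj (Finset.univ : Finset (Atom 𝒜 ℱ V)).toList σ

/-- The CAT formula over the variable subset `xs` determined by `σ`. -/
noncomputable def gccatFml (xs : Finset V) (σ : Atom 𝒜 ℱ V → Bool) : Fml 𝒜 ℱ V :=
  signedConj (atomsOn 𝒜 ℱ xs) σ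

/-- `σ` is a general-case CAT (GCCAT) sign assignment over the variables `xs`:
the conjunct `xᵢ = xⱼ` occurs (positively) iff `i = j`, and (canonically) `σ`
is `false` outside the atoms over `xs`. -/
noncomputable def gccatSignB (xs : Finset V) (σ : Atom 𝒜 ℱ V → Bool) : Bool :=
  (xs.toList.all fun i => xs.toList.all fun j => σ (.eq i j) == decide (i = j)) &&
  ((Finset.univ : Finset (Atom 𝒜 ℱ V)).toList.all fun a =>
      decide (a.varset ⊆ xs) || !σ a)

/-- `a` is an atom of an `x`-extension: its variables are among `insert x xs`
and `x` actually occurs in it. -/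
def isExtAtom (xs : Finset V) (x : V) (a : Atom 𝒜 ℱ V) : Bool :=
  decide (a.varset ⊆ insert x xs) && decide (x ∈ a.varset)

/-- The list of atoms of `x`-extensions of GCCAT formulas over `xs`. -/
noncomputable def extAtoms (𝒜 ℱ : Type) [Fintype 𝒜] [DecidableEq 𝒜] [Fintype ℱ] [DecidableEq ℱ]
    {V : Type} [Fintype V] [DecidableEq V] (xs : Finset V) (x : V) : List (Atom 𝒜 ℱ V) :=
  (Finset.univ : Finset (Atom 𝒜 ℱ V)).toList.filter (isExtAtom xs x)

/-- The `x`-extension formula determined by a sign assignment `τ`. -/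
noncomputable def extFml (xs : Finset V) (x : V) (τ : Atom 𝒜 ℱ V → Bool) : Fml 𝒜 ℱ V :=
  signedConj (extAtoms 𝒜 ℱ xs x) τ

/-- `τ` is the sign assignment of an `x`-extension of a GCCAT formula over
`xs`: `x = x` positive, `x = xᵢ` and `xᵢ = x` negative, and (canonically) `τ`
is `false` outside extension atoms. -/
noncomputable def extSignB (xs : Finset V) (x : V) (τ : Atom 𝒜 ℱ V → Bool) : Bool :=
  τ (.eq x x) &&
  (xs.toList.all fun v => !τ (.eq x v) && !τ (.eq v x)) &&
  ((Finset.univ : Finset (Atom 𝒜 ℱ V)).toList.all fun a => isExtAtom xs x a || !τ a)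

/-- The list of all sign assignments of `x`-extensions over `xs`. -/
noncomputable def extSigns (𝒜 ℱ : Type) [Fintype 𝒜] [DecidableEq 𝒜] [Fintype ℱ] [DecidableEq ℱ]
    {V : Type} [Fintype V] [DecidableEq V] (xs : Finset V) (x : V) :
    List (Atom 𝒜 ℱ V → Bool) :=
  (Finset.univ : Finset (Atom 𝒜 ℱ V → Bool)).toList.filter (extSignB xs x)

/-- Merge of two sign assignments: the union of their positive literals. -/
def mergeSign (τ₁ τ₂ : Atom 𝒜 ℱ V → Bool) : Atom 𝒜 ℱ V → Bool :=
  fun a => τ₁ a || τ₂ a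

end AtomicTypes

/-- `T₁ ⊛ T₂` is defined iff the sets `S(T₁)`, `S(T₂)` of positive
non-equality literals are disjoint. -/
def MergeOK (τ₁ τ₂ : Atom 𝒜 ℱ V → Bool) : Prop :=
  ∀ a : Atom 𝒜 ℱ V, a.isEq = false → ¬(τ₁ a = true ∧ τ₂ a = true)

/-! ## Counting star formulas over the language `L`

Variables are `Option (Fin n ⊕ Fin m)`: `some (inl i)` is the GCCAT variable
`xᵢ`, `some (inr j)` is the variable `yⱼ` of an equality conjunct, and `none`
is the bound variable `x` of the counting quantifiers. -/

/-- The variable type of counting star formulas. -/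
abbrev VV (n m : ℕ) : Type := Option (Fin n ⊕ Fin m)

/-- The variable `xᵢ`. -/
def xvar {n m : ℕ} (i : Fin n) : VV n m := some (Sum.inl i)

/-- The variable `yⱼ`. -/
def yvar {n m : ℕ} (j : Fin m) : VV n m := some (Sum.inr j)

/-- The set `{x₁,…,xₙ}` of GCCAT variables. -/
def XS (n m : ℕ) : Finset (VV n m) :=
  (Finset.univ : Finset (Fin n)).image (fun i => xvar i)

/-- Data of a counting star formula: the equality map `ι` (conjuncts
`yⱼ = x_{ι j}`), the GCCAT sign assignment `σ` over `{x₁,…,xₙ}`, and the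
counting function `γ` on `x`-extensions. -/
structure CStar (𝒜 ℱ : Type) (n m : ℕ) where
  ι : Fin m → Fin n
  σ : Atom 𝒜 ℱ (VV n m) → Bool
  γ : (Atom 𝒜 ℱ (VV n m) → Bool) → CQ

/-- Well-formedness: `σ` is a GCCAT sign assignment over `{x₁,…,xₙ}`. -/
def CStar.WF {𝒜 ℱ : Type} [Fintype 𝒜] [DecidableEq 𝒜] [Fintype ℱ] [DecidableEq ℱ]
    {n m : ℕ} (c : CStar 𝒜 ℱ n m) : Prop :=
  gccatSignB (XS n m) c.σ = true

/-- The counting star formula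
`⋀_j yⱼ = x_{ι j} ∧ F_σ ∧ ⋀_{F′ ∈ ext(F_σ, x)} ∃^{γ(F′)} x. F′`. -/
noncomputable def csFml {𝒜 ℱ : Type}
    [Fintype 𝒜] [DecidableEq 𝒜] [Fintype ℱ] [DecidableEq ℱ] {n m : ℕ}
    (c : CStar 𝒜 ℱ n m) : Fml 𝒜 ℱ (VV n m) :=
  (listConj ((List.finRange m).map fun j => Fml.eq (yvar j) (xvar (c.ι j)))).and <|
  (gccatFml (XS n m) c.σ).and <|
  listConj ((extSigns 𝒜 ℱ (XS n m) none).map fun τ =>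
    Fml.cnt (c.γ τ) none (extFml (XS n m) none τ))

/-! ## The marked language `L′ = L ∪ {B₁, B₂}` and spatial building blocks

The unary symbols of `L′` are `𝒜 ⊕ Fin 2`; `Sum.inr 0` is the marker `B₁` and
`Sum.inr 1` is the marker `B₂`.  A marking `m ⊆ {1,2}` is a `Finset (Fin 2)`. -/

/-- The marking `{1}`. -/
def mk1 : Finset (Fin 2) := {0}
/-- The marking `{2}`. -/
def mk2 : Finset (Fin 2) := {1}
/-- The marking `{1,2}`. -/
def mk12 : Finset (Fin 2) := {0, 1}

/-- The `L′`-environment `e^m` obtained from an `L`-environment `e`: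
the marker `B_q` holds of `d` iff `q ∈ m` and `d ∉ {e(x₁),…,e(xₙ)}`. -/
def markEnv {𝒜 ℱ D : Type} {n m : ℕ} (e : Env 𝒜 ℱ (VV n m) D)
    (mk : Finset (Fin 2)) : Env (𝒜 ⊕ Fin 2) ℱ (VV n m) D where
  un := Sum.elim e.un (fun q d => q ∈ mk ∧ ∀ i : Fin n, d ≠ e.var (xvar i))
  bin := e.bin
  var := e.var

/-- The restriction `e|L` of an `L′`-environment to the language `L`. -/
def unmarkEnv {𝒜 ℱ D : Type} {n m : ℕ} (e : Env (𝒜 ⊕ Fin 2) ℱ (VV n m) D) :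
    Env 𝒜 ℱ (VV n m) D where
  un := fun A => e.un (Sum.inl A)
  bin := e.bin
  var := e.var

/-- The spatial building blocks of the translations `str_m` of counting stars:
`kstr(F_σ)`, `empe`, `oneNum_m(T)` and `anyNum_m(T)`. -/
inductive Blk (𝒜 ℱ : Type) (n m : ℕ) : Type where
  | kstr (σ : Atom 𝒜 ℱ (VV n m) → Bool) : Blk 𝒜 ℱ n m
  | empe : Blk 𝒜 ℱ n m
  | oneNum (mk : Finset (Fin 2)) (τ : Atom 𝒜 ℱ (VV n m) → Bool) : Blk 𝒜 ℱ n m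
  | anyNum (mk : Finset (Fin 2)) (τ : Atom 𝒜 ℱ (VV n m) → Bool) : Blk 𝒜 ℱ n m

section BlkSem

variable {𝒜 ℱ D : Type} [Fintype 𝒜] [DecidableEq 𝒜] [Fintype ℱ] [DecidableEq ℱ]
  {n m : ℕ}

/-- `d` is outside `{e(x₁),…,e(xₙ)}` (the guard `⋀ᵢ x ≠ xᵢ`). -/
def guardAt (e : Env (𝒜 ⊕ Fin 2) ℱ (VV n m) D) (d : D) : Prop :=
  ∀ i : Fin n, d ≠ e.var (xvar i)

/-- Truth of an `L`-atom in an `L′`-environment under a valuation `ρ`. -/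
def Atom.holdsAt (e : Env (𝒜 ⊕ Fin 2) ℱ (VV n m) D) (ρ : VV n m → D) :
    Atom 𝒜 ℱ (VV n m) → Prop
  | .un A v => e.un (Sum.inl A) (ρ v)
  | .bin f v w => e.bin f (ρ v) (ρ w)
  | .eq v w => ρ v = ρ w

/-- The GCCAT formula of `σ` over `{x₁,…,xₙ}` holds in `e`. -/
def gccatTruth (e : Env (𝒜 ⊕ Fin 2) ℱ (VV n m) D)
    (σ : Atom 𝒜 ℱ (VV n m) → Bool) : Prop :=
  ∀ a : Atom 𝒜 ℱ (VV n m), a.varset ⊆ XS n m →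
    (a.holdsAt e e.var ↔ σ a = true)

/-- The `x`-extension of `σ` with sign `τ` holds in `e` with `x ↦ d`. -/
def extTruth (e : Env (𝒜 ⊕ Fin 2) ℱ (VV n m) D) (d : D)
    (τ : Atom 𝒜 ℱ (VV n m) → Bool) : Prop :=
  ∀ a : Atom 𝒜 ℱ (VV n m), isExtAtom (XS n m) none a = true →
    (a.holdsAt e (Function.update e.var none d) ↔ τ a = true)

/-- `Mark_mk(x)` holds of `d` in `e`: `B_q(d)` iff `q ∈ mk`. -/
def markTruth (e : Env (𝒜 ⊕ Fin 2) ℱ (VV n m) D) (d : D)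
    (mk : Finset (Fin 2)) : Prop :=
  ∀ q : Fin 2, e.un (Sum.inr q) d ↔ q ∈ mk

/-- The sign assignment of the empty extension: only `x = x` is positive. -/
def emptyExtSign : Atom 𝒜 ℱ (VV n m) → Bool :=
  fun a => decide (a = Atom.eq none none)

/-- The sign assignment of the empty GCCAT formula: only the trivial
equalities `xᵢ = xᵢ` are positive. -/
def emptyGSign : Atom 𝒜 ℱ (VV n m) → Bool :=
  fun a => match a with
    | .eq v w => decide (v = w)
    | _ => false

/-- `allEmptyExt(x)` holds of `d` in `e`: the empty extension together with
`Mark_∅(x)`. -/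
def allEmptyAt (e : Env (𝒜 ⊕ Fin 2) ℱ (VV n m) D) (d : D) : Prop :=
  extTruth e d emptyExtSign ∧ markTruth e d ∅

/-- Semantics of the building blocks as predicates on `L′`-environments. -/
def Blk.sem : Blk 𝒜 ℱ n m → Env (𝒜 ⊕ Fin 2) ℱ (VV n m) D → Prop
  | .kstr σ => fun e => gccatTruth e σ ∧ ∀ d, guardAt e d → allEmptyAt e d
  | .empe => fun e => gccatTruth e emptyGSign ∧ ∀ d, guardAt e d → allEmptyAt e d
  | .anyNum mk τ => fun e => gccatTruth e emptyGSign ∧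
      ∀ d, guardAt e d → ((extTruth e d τ ∧ markTruth e d mk) ∨ allEmptyAt e d)
  | .oneNum mk τ => fun e =>
      (gccatTruth e emptyGSign ∧
        ∀ d, guardAt e d → ((extTruth e d τ ∧ markTruth e d mk) ∨ allEmptyAt e d)) ∧
      {d : D | guardAt e d ∧ extTruth e d τ ∧ markTruth e d mk}.ncard = 1

/-- `emp`: all predicates are interpreted by empty relations. -/
def emp' {𝒜' ℱ' V' D' : Type} : Env 𝒜' ℱ' V' D' → Prop := fun e =>
  (∀ A d, ¬ e.un A d) ∧ (∀ f d₁ d₂, ¬ e.bin f d₁ d₂)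

/-- Semantics of a finite spatial conjunction of building blocks (an empty
conjunction is `emp`). -/
noncomputable def semM (s : Multiset (Blk 𝒜 ℱ n m))
    (e : Env (𝒜 ⊕ Fin 2) ℱ (VV n m) D) : Prop :=
  (s.toList.foldr (fun b P => spand (Blk.sem b) P) emp') e

end BlkSem

section Rules

variable {𝒜 ℱ : Type} [Fintype 𝒜] [DecidableEq 𝒜] [Fintype ℱ] [DecidableEq ℱ]
  {n m : ℕ}

/-- The transformation rules (1)–(4) for combining spatial conjuncts,
applicable only when `T₁ ⊛ T₂` is defined. -/
inductive Rule14 : Multiset (Blk 𝒜 ℱ n m) → Multiset (Blk 𝒜 ℱ n m) → Prop where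
  | r1 (τ₁ τ₂ : Atom 𝒜 ℱ (VV n m) → Bool) :
      extSignB (XS n m) none τ₁ = true → extSignB (XS n m) none τ₂ = true →
      MergeOK τ₁ τ₂ →
      Rule14 {Blk.oneNum mk1 τ₁, Blk.oneNum mk2 τ₂}
             {Blk.oneNum mk12 (mergeSign τ₁ τ₂)}
  | r2 (τ₁ τ₂ : Atom 𝒜 ℱ (VV n m) → Bool) :
      extSignB (XS n m) none τ₁ = true → extSignB (XS n m) none τ₂ = true →
      MergeOK τ₁ τ₂ →
      Rule14 {Blk.oneNum mk1 τ₁, Blk.anyNum mk2 τ₂}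
             {Blk.oneNum mk12 (mergeSign τ₁ τ₂), Blk.anyNum mk2 τ₂}
  | r3 (τ₁ τ₂ : Atom 𝒜 ℱ (VV n m) → Bool) :
      extSignB (XS n m) none τ₁ = true → extSignB (XS n m) none τ₂ = true →
      MergeOK τ₁ τ₂ →
      Rule14 {Blk.anyNum mk1 τ₁, Blk.oneNum mk2 τ₂}
             {Blk.anyNum mk1 τ₁, Blk.oneNum mk12 (mergeSign τ₁ τ₂)}
  | r4 (τ₁ τ₂ : Atom 𝒜 ℱ (VV n m) → Bool) :
      extSignB (XS n m) none τ₁ = true → extSignB (XS n m) none τ₂ = true →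
      MergeOK τ₁ τ₂ →
      Rule14 {Blk.anyNum mk1 τ₁, Blk.anyNum mk2 τ₂}
             {Blk.anyNum mk1 τ₁, Blk.anyNum mk2 τ₂,
              Blk.anyNum mk12 (mergeSign τ₁ τ₂)}

/-- The transformation rules (5) and (6). -/
inductive Rule56 : Multiset (Blk 𝒜 ℱ n m) → Multiset (Blk 𝒜 ℱ n m) → Prop where
  | r5 (τ : Atom 𝒜 ℱ (VV n m) → Bool) :
      extSignB (XS n m) none τ = true →
      Rule56 {Blk.anyNum mk1 τ} {Blk.empe}
  | r6 (τ : Atom 𝒜 ℱ (VV n m) → Bool) :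
      extSignB (XS n m) none τ = true →
      Rule56 {Blk.anyNum mk2 τ} {Blk.empe}

/-- One of the six transformation rules. -/
def Rule (G₁ G₂ : Multiset (Blk 𝒜 ℱ n m)) : Prop :=
  Rule14 G₁ G₂ ∨ Rule56 G₁ G₂

/-- Structural equivalence steps: `⋆` is applied modulo the unit law for the
(empty-heap) conjunct `empe` and the idempotence of `anyNum`. -/
inductive SEq : Multiset (Blk 𝒜 ℱ n m) → Multiset (Blk 𝒜 ℱ n m) → Prop where
  | empeIntro (s : Multiset (Blk 𝒜 ℱ n m)) : SEq s (Blk.empe ::ₘ s)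
  | empeElim (s : Multiset (Blk 𝒜 ℱ n m)) : SEq (Blk.empe ::ₘ s) s
  | anyDup (mk : Finset (Fin 2)) (τ : Atom 𝒜 ℱ (VV n m) → Bool)
      (s : Multiset (Blk 𝒜 ℱ n m)) :
      SEq (Blk.anyNum mk τ ::ₘ s) (Blk.anyNum mk τ ::ₘ Blk.anyNum mk τ ::ₘ s)
  | anyContract (mk : Finset (Fin 2)) (τ : Atom 𝒜 ℱ (VV n m) → Bool)
      (s : Multiset (Blk 𝒜 ℱ n m)) :
      SEq (Blk.anyNum mk τ ::ₘ Blk.anyNum mk τ ::ₘ s) (Blk.anyNum mk τ ::ₘ s)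

/-- A single step of the rewriting used in the `⊳` (yields) relation: a rule
applied inside a spatial context (modulo associativity and commutativity,
which the multiset representation provides), where rules (5), (6) may be
applied only when rules (1)–(4) are not applicable; or a structural step. -/
inductive YStep : Multiset (Blk 𝒜 ℱ n m) → Multiset (Blk 𝒜 ℱ n m) → Prop where
  | ofR14 (G₁ G₂ s : Multiset (Blk 𝒜 ℱ n m)) :
      Rule14 G₁ G₂ → YStep (G₁ + s) (G₂ + s)
  | ofR56 (G₁ G₂ s : Multiset (Blk 𝒜 ℱ n m)) :
      Rule56 G₁ G₂ →
      (¬ ∃ H₁ H₂ : Multiset (Blk 𝒜 ℱ n m), Rule14 H₁ H₂ ∧ H₁ ≤ G₁ + s) →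
      YStep (G₁ + s) (G₂ + s)
  | struct (s₁ s₂ : Multiset (Blk 𝒜 ℱ n m)) : SEq s₁ s₂ → YStep s₁ s₂

/-- All `oneNum`/`anyNum` conjuncts carry the marking `{1,2}`. -/
def OnlyFinal (s : Multiset (Blk 𝒜 ℱ n m)) : Prop :=
  ∀ b ∈ s, ∀ (mk : Finset (Fin 2)) (τ : Atom 𝒜 ℱ (VV n m) → Bool),
    (b = Blk.oneNum mk τ ∨ b = Blk.anyNum mk τ) → mk = mk12

/-- The yields relation `G₁ ⊳ G₂`, where `G₂ : Option _` with `none`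
representing `⊥`: first the conjunction `kstr(F₁) ⋆ kstr(F₂)` is replaced by
`kstr(F₁ ⊛ F₂)`, or by `⊥` if `F₁ ⊛ F₂` is undefined; then a sequence of the
transformation rules is applied (with rules (5), (6) applied only when rules
(1)–(4) are inapplicable), such that the result contains only spatial
`oneNum`/`anyNum` conjuncts of the forms `oneNum_{1,2}` and `anyNum_{1,2}`. -/
def Yields (s₁ : Multiset (Blk 𝒜 ℱ n m)) : Option (Multiset (Blk 𝒜 ℱ n m)) → Prop
  | none => ∃ (σ₁ σ₂ : Atom 𝒜 ℱ (VV n m) → Bool) (rest : Multiset (Blk 𝒜 ℱ n m)),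
      s₁ = Blk.kstr σ₁ ::ₘ Blk.kstr σ₂ ::ₘ rest ∧ ¬ MergeOK σ₁ σ₂
  | some s₂ => ∃ (σ₁ σ₂ : Atom 𝒜 ℱ (VV n m) → Bool) (rest : Multiset (Blk 𝒜 ℱ n m)),
      s₁ = Blk.kstr σ₁ ::ₘ Blk.kstr σ₂ ::ₘ rest ∧ MergeOK σ₁ σ₂ ∧
      Relation.ReflTransGen YStep (Blk.kstr (mergeSign σ₁ σ₂) ::ₘ rest) s₂ ∧
      OnlyFinal s₂

/-- The spatial translation `xstr_mk(∃^{s} x. F′_τ)` as a multiset of spatial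
conjuncts: `∃^{=k}` becomes `k` copies of `oneNum` (and `empe`), and `∃^{≥k}`
additionally has an `anyNum` conjunct. -/
def xstrBlocks (mk : Finset (Fin 2)) (τ : Atom 𝒜 ℱ (VV n m) → Bool) :
    CQ → Multiset (Blk 𝒜 ℱ n m)
  | .exact k => Multiset.replicate k (Blk.oneNum mk τ) + {Blk.empe}
  | .atLeast k => Multiset.replicate k (Blk.oneNum mk τ) + {Blk.empe, Blk.anyNum mk τ}

/-- The spatial conjuncts of the translation `str_mk(C)` of a counting star
formula `C`: `kstr(F_σ) ⋆ ⋆_{τ} xstr_mk(∃^{γ τ} x. F′_τ)`. -/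
noncomputable def strBlocks (mk : Finset (Fin 2)) (c : CStar 𝒜 ℱ n m) :
    Multiset (Blk 𝒜 ℱ n m) :=
  Blk.kstr c.σ ::ₘ
    ((extSigns 𝒜 ℱ (XS n m) none).map fun τ => xstrBlocks mk τ (c.γ τ)).sum

/-- Satisfaction of the equality part `E ≡ ⋀_j yⱼ = x_{ι j}`. -/
def eqSat {𝒜' D : Type} (c : CStar 𝒜 ℱ n m) (e : Env 𝒜' ℱ (VV n m) D) : Prop :=
  ∀ j : Fin m, e.var (yvar j) = e.var (xvar (c.ι j))

/-- Truth of the translation `str_mk(C) = E ∧ (spatial conjunction of blocks)`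
in an `L′`-environment. -/
noncomputable def strSat {D : Type} (mk : Finset (Fin 2)) (c : CStar 𝒜 ℱ n m)
    (e : Env (𝒜 ⊕ Fin 2) ℱ (VV n m) D) : Prop :=
  eqSat c e ∧ semM (strBlocks mk c) e

/-- `ERes C₁ C₂ C₃`: the counting stars have the same equality part and
`str₁(C₁) ⋆ str₂(C₂) ⊳ str₁,₂(C₃)`. -/
noncomputable def ERes (c₁ c₂ c₃ : CStar 𝒜 ℱ n m) : Prop :=
  c₁.ι = c₂.ι ∧ c₂.ι = c₃.ι ∧
  Yields (strBlocks mk1 c₁ + strBlocks mk2 c₂) (some (strBlocks mk12 c₃))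

end Rules

/-!
Outside the tuple `x₁,…,xₙ` both sides speak about the same thing: every such element `d`
realizes exactly one extension type `τ`, `C` holds iff for each `τ` the number of realizers meets
its counting quantifier, and in `e^m` every such `d` carries the markers of `m`.

For `⇒`, give every cell of `e^m` an owner: a unary cell its argument, a binary cell its first
argument unless that is a tuple element, else its second. The cells owned by the tuple form the
`kstr(F)` conjunct; the realizers of `τ` are dealt out one to each `oneNum_m(F′_τ)` conjunct and
the rest to `anyNum_m(F′_τ)`, each conjunct taking the cells its elements own.

For `⇐`, the marker `B_q` (`q ∈ m`) of an element `d` lies in exactly one conjunct of a split, so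
exactly one conjunct claims `d`; it is a `oneNum_m` or `anyNum_m` conjunct for the type of `d`,
and all other conjuncts are empty at `d`. Counting claims recovers the quantifiers.
-/

namespace Env

variable {𝒜 ℱ V D : Type} {e e₁ e₂ : Env 𝒜 ℱ V D}

theorem ext (hu : ∀ A d, e₁.un A d ↔ e₂.un A d) (hb : ∀ f d₁ d₂, e₁.bin f d₁ d₂ ↔ e₂.bin f d₁ d₂)
    (hv : e₁.var = e₂.var) : e₁ = e₂ := by
  cases e₁; cases e₂
  congr
  · exact funext₂ fun A d => propext (hu A d)
  · exact funext₃ fun f d₁ d₂ => propext (hb f d₁ d₂)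

theorem Split.symm (h : e.Split e₁ e₂) : e.Split e₂ e₁ :=
  ⟨h.2.1, h.1, fun A d => ⟨(h.2.2.1 A d).1.trans or_comm, (h.2.2.1 A d).2 ∘ And.symm⟩,
    fun f d₁ d₂ => ⟨(h.2.2.2 f d₁ d₂).1.trans or_comm, (h.2.2.2 f d₁ d₂).2 ∘ And.symm⟩⟩

theorem Split.un_iff (h : e.Split e₁ e₂) (A : 𝒜) (d : D) : e.un A d ↔ e₁.un A d ∨ e₂.un A d :=
  (h.2.2.1 A d).1

theorem Split.not_un_right (h : e.Split e₁ e₂) {A : 𝒜} {d : D} (h₁ : e₁.un A d) :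
    ¬ e₂.un A d :=
  fun h₂ => (h.2.2.1 A d).2 ⟨h₁, h₂⟩

theorem Split.eq_of_emp_left (h : e.Split e₁ e₂) (h₁ : emp' e₁) : e₂ = e :=
  Env.ext (fun A d => by simp [h.un_iff, h₁.1 A d])
    (fun f d₁ d₂ => by simp [(h.2.2.2 f d₁ d₂).1, h₁.2 f d₁ d₂]) h.2.1

theorem split_emp_left (e : Env 𝒜 ℱ V D) :
    e.Split ⟨fun _ _ => False, fun _ _ _ => False, e.var⟩ e :=
  ⟨rfl, rfl, fun _ _ => by simp, fun _ _ _ => by simp⟩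

theorem Split.assoc {e₃ e₄ : Env 𝒜 ℱ V D} (h : e.Split e₁ e₂) (h' : e₂.Split e₃ e₄) :
    ∃ e₁₃, e.Split e₁₃ e₄ ∧ e₁₃.Split e₁ e₃ := by
  obtain ⟨hv₁, hv₂, hu, hb⟩ := h
  obtain ⟨hv₃, hv₄, hu', hb'⟩ := h'
  refine ⟨⟨fun A d => e₁.un A d ∨ e₃.un A d, fun f d₁ d₂ => e₁.bin f d₁ d₂ ∨ e₃.bin f d₁ d₂,
    e.var⟩, ⟨rfl, hv₄.trans hv₂, fun A d => ?_, fun f d₁ d₂ => ?_⟩,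
    ⟨hv₁, hv₃.trans hv₂, fun A d => ?_, fun f d₁ d₂ => ?_⟩⟩
  all_goals
    first
    | (have := hu A d; have := hu' A d; dsimp only; tauto)
    | (have := hb f d₁ d₂; have := hb' f d₁ d₂; dsimp only; tauto)

def restrict (u : Env 𝒜 ℱ V D) (o : D → D → D) (S : Set D) : Env 𝒜 ℱ V D where
  un A d := u.un A d ∧ d ∈ S
  bin f d₁ d₂ := u.bin f d₁ d₂ ∧ o d₁ d₂ ∈ S
  var := u.var

theorem restrict_univ (u : Env 𝒜 ℱ V D) (o : D → D → D) : u.restrict o Set.univ = u :=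
  Env.ext (fun _ _ => and_iff_left trivial) (fun _ _ _ => and_iff_left trivial) rfl

theorem emp_restrict_empty (u : Env 𝒜 ℱ V D) (o : D → D → D) : emp' (u.restrict o ∅) :=
  ⟨fun _ _ h => h.2, fun _ _ _ h => h.2⟩

theorem split_restrict_union (u : Env 𝒜 ℱ V D) (o : D → D → D) {S T : Set D}
    (h : Disjoint S T) : (u.restrict o (S ∪ T)).Split (u.restrict o S) (u.restrict o T) := by
  refine ⟨rfl, rfl, fun A d => ⟨?_, ?_⟩, fun f d₁ d₂ => ⟨?_, ?_⟩⟩ <;>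
    simp only [restrict, Set.mem_union] <;>
    first
    | tauto
    | exact fun ⟨⟨_, h₁⟩, ⟨_, h₂⟩⟩ => Set.disjoint_left.1 h h₁ h₂

end Env

section SpatialConjunction

variable {𝒜 ℱ V D : Type}

theorem spand_comm (P Q : Env 𝒜 ℱ V D → Prop) : spand P Q = spand Q P := by
  funext e
  apply propext
  constructor <;> exact fun ⟨e₁, e₂, hs, h₁, h₂⟩ => ⟨e₂, e₁, hs.symm, h₂, h₁⟩

theorem spand_assoc (P Q R : Env 𝒜 ℱ V D → Prop) :
    spand (spand P Q) R = spand P (spand Q R) := by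
  funext e
  apply propext
  constructor
  · rintro ⟨e₁₂, e₃, hs, ⟨e₁, e₂, hs', h₁, h₂⟩, h₃⟩
    obtain ⟨e₂₃, hA, hB⟩ := hs.symm.assoc hs'.symm
    exact ⟨e₁, e₂₃, hA.symm, h₁, e₂, e₃, hB.symm, h₂, h₃⟩
  · rintro ⟨e₁, e₂₃, hs, h₁, e₂, e₃, hs', h₂, h₃⟩
    obtain ⟨e₁₂, hA, hB⟩ := hs.assoc hs'
    exact ⟨e₁₂, e₃, hA, ⟨e₁, e₂, hB, h₁, h₂⟩, h₃⟩

theorem spand_left_comm (P Q R : Env 𝒜 ℱ V D → Prop) :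
    spand P (spand Q R) = spand Q (spand P R) := by
  rw [← spand_assoc, spand_comm P Q, spand_assoc]

theorem emp_spand (P : Env 𝒜 ℱ V D → Prop) : spand emp' P = P := by
  funext e
  apply propext
  constructor
  · rintro ⟨e₁, e₂, hs, h₁, h₂⟩
    rwa [← hs.eq_of_emp_left h₁]
  · exact fun h => ⟨_, e, e.split_emp_left, ⟨fun _ _ => id, fun _ _ _ => id⟩, h⟩

end SpatialConjunction

section SpatialBlocks

variable {𝒜 ℱ D : Type} [DecidableEq 𝒜] [DecidableEq ℱ] {n m : ℕ}

instance : LeftCommutative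
    (fun (b : Blk 𝒜 ℱ n m) (P : Env (𝒜 ⊕ Fin 2) ℱ (VV n m) D → Prop) => spand b.sem P) :=
  ⟨fun _ _ _ => spand_left_comm _ _ _⟩

theorem semM_eq_foldr (s : Multiset (Blk 𝒜 ℱ n m)) :
    semM (D := D) s = s.foldr (fun b P => spand b.sem P) emp' := by
  funext e
  conv_rhs => rw [← Multiset.coe_toList s, Multiset.coe_foldr]
  rfl

theorem semM_zero :
    semM (0 : Multiset (Blk 𝒜 ℱ n m)) = (emp' : Env (𝒜 ⊕ Fin 2) ℱ (VV n m) D → Prop) := by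
  rw [semM_eq_foldr, Multiset.foldr_zero]

theorem semM_cons (b : Blk 𝒜 ℱ n m) (s : Multiset (Blk 𝒜 ℱ n m)) :
    semM (D := D) (b ::ₘ s) = spand b.sem (semM s) := by
  rw [semM_eq_foldr, semM_eq_foldr, Multiset.foldr_cons]

theorem semM_add (s t : Multiset (Blk 𝒜 ℱ n m)) :
    semM (D := D) (s + t) = spand (semM s) (semM t) := by
  induction s using Multiset.induction_on with
  | empty => rw [zero_add, semM_zero, emp_spand]
  | cons b s ih => rw [Multiset.cons_add, semM_cons, semM_cons, ih, spand_assoc]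

theorem semM_singleton (b : Blk 𝒜 ℱ n m) : semM (D := D) {b} = b.sem := by
  rw [← Multiset.cons_zero, semM_cons, semM_zero, spand_comm, emp_spand]

end SpatialBlocks

section Conjunctions

variable {𝒜 ℱ V D : Type}

theorem listConj_sat [DecidableEq V] (l : List (Fml 𝒜 ℱ V)) (e : Env 𝒜 ℱ V D) :
    (listConj l).Sat e ↔ ∀ F ∈ l, F.Sat e := by
  induction l with
  | nil => simp [listConj, Fml.Sat]
  | cons F l ih => simp [listConj, Fml.Sat, ← ih]

theorem signedConj_sat [DecidableEq V] (l : List (Atom 𝒜 ℱ V)) (σ : Atom 𝒜 ℱ V → Bool)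
    (e : Env 𝒜 ℱ V D) :
    (signedConj l σ).Sat e ↔ ∀ a ∈ l, (a.toFml.Sat e ↔ σ a = true) := by
  rw [signedConj, listConj_sat, List.forall_mem_map]
  refine forall₂_congr fun a _ => ?_
  cases σ a <;> simp [Fml.Sat]

variable [Fintype 𝒜] [DecidableEq 𝒜] [Fintype ℱ] [DecidableEq ℱ] [Fintype V] [DecidableEq V]
  {xs : Finset V} {x : V}

theorem mem_atomsOn {a : Atom 𝒜 ℱ V} : a ∈ atomsOn 𝒜 ℱ xs ↔ a.varset ⊆ xs := by
  simp [atomsOn]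

theorem mem_extAtoms {a : Atom 𝒜 ℱ V} : a ∈ extAtoms 𝒜 ℱ xs x ↔ isExtAtom xs x a = true := by
  simp [extAtoms]

theorem mem_extSigns {τ : Atom 𝒜 ℱ V → Bool} :
    τ ∈ extSigns 𝒜 ℱ xs x ↔ extSignB xs x τ = true := by
  simp [extSigns]

theorem nodup_extSigns : (extSigns 𝒜 ℱ xs x).Nodup :=
  (Finset.nodup_toList _).filter _

end Conjunctions

section FormulaSemantics

variable {𝒜 ℱ D : Type} {n m : ℕ}

theorem Atom.holdsAt_markEnv (e : Env 𝒜 ℱ (VV n m) D) (mk : Finset (Fin 2))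
    (ρ : VV n m → D) (a : Atom 𝒜 ℱ (VV n m)) :
    a.holdsAt (markEnv e mk) ρ ↔ a.toFml.Sat { e with var := ρ } := by
  cases a <;> rfl

theorem markTruth_markEnv (e : Env 𝒜 ℱ (VV n m) D) (mk : Finset (Fin 2)) (d : D)
    (hg : guardAt (markEnv e mk) d) : markTruth (markEnv e mk) d mk :=
  fun _ => and_iff_left hg

variable [Fintype 𝒜] [DecidableEq 𝒜] [Fintype ℱ] [DecidableEq ℱ]

def CStar.Realized (c : CStar 𝒜 ℱ n m) (u : Env (𝒜 ⊕ Fin 2) ℱ (VV n m) D) : Prop :=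
  gccatTruth u c.σ ∧
    ∀ τ ∈ extSigns 𝒜 ℱ (XS n m) none, (c.γ τ).sat {d | extTruth u d τ}.ncard

theorem gccatFml_sat_iff (e : Env 𝒜 ℱ (VV n m) D) (mk : Finset (Fin 2))
    (σ : Atom 𝒜 ℱ (VV n m) → Bool) :
    (gccatFml (XS n m) σ).Sat e ↔ gccatTruth (markEnv e mk) σ := by
  simp only [gccatFml, signedConj_sat, mem_atomsOn, gccatTruth, Atom.holdsAt_markEnv]
  rfl

theorem extFml_sat_iff (e : Env 𝒜 ℱ (VV n m) D) (mk : Finset (Fin 2))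
    (τ : Atom 𝒜 ℱ (VV n m) → Bool) (d : D) :
    (extFml (XS n m) none τ).Sat (e.updVar none d) ↔ extTruth (markEnv e mk) d τ := by
  simp only [extFml, signedConj_sat, mem_extAtoms, extTruth, Atom.holdsAt_markEnv]
  rfl

theorem csFml_sat_iff (e : Env 𝒜 ℱ (VV n m) D) (mk : Finset (Fin 2)) (c : CStar 𝒜 ℱ n m) :
    (csFml c).Sat e ↔ eqSat c (markEnv e mk) ∧ c.Realized (markEnv e mk) := by
  simp only [csFml, Fml.Sat, listConj_sat, List.forall_mem_map, List.mem_finRange,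
    forall_const, gccatFml_sat_iff e mk, extFml_sat_iff e mk, CStar.Realized]
  rfl

end FormulaSemantics

section ExtensionTypes

theorem isExtAtom_iff {𝒜 ℱ V : Type} [DecidableEq V] {xs : Finset V} {x : V}
    {a : Atom 𝒜 ℱ V} : isExtAtom xs x a = true ↔ a.varset ⊆ insert x xs ∧ x ∈ a.varset := by
  simp [isExtAtom]

theorem extSignB_iff {𝒜 ℱ V : Type} [Fintype 𝒜] [Fintype ℱ] [Fintype V] [DecidableEq V]
    {xs : Finset V} {x : V} {τ : Atom 𝒜 ℱ V → Bool} :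
    extSignB xs x τ = true ↔
      τ (.eq x x) = true ∧ (∀ v ∈ xs, τ (.eq x v) = false ∧ τ (.eq v x) = false) ∧
        ∀ a, isExtAtom xs x a = false → τ a = false := by
  simp only [extSignB, Bool.and_eq_true, List.all_eq_true, Finset.mem_toList, Finset.mem_univ,
    Bool.or_eq_true, Bool.not_eq_eq_eq_not, Bool.not_true, forall_const, and_assoc]
  refine and_congr_right fun _ => and_congr_right fun _ => forall_congr' fun a => ?_
  cases isExtAtom xs x a <;> simp

variable {𝒜 ℱ D : Type} {n m : ℕ} {u : Env (𝒜 ⊕ Fin 2) ℱ (VV n m) D} {d : D}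
  {a : Atom 𝒜 ℱ (VV n m)}

theorem mem_XS_iff {v : VV n m} : v ∈ XS n m ↔ ∃ i, v = xvar i := by
  simp [XS, eq_comm]

theorem xvar_mem_XS (i : Fin n) : (xvar i : VV n m) ∈ XS n m :=
  mem_XS_iff.2 ⟨i, rfl⟩

theorem isExtAtom_eq_none_xvar (i : Fin n) :
    isExtAtom (XS n m) none (.eq none (xvar i) : Atom 𝒜 ℱ (VV n m)) = true := by
  simp [isExtAtom_iff, Atom.varset, Finset.insert_subset_iff, xvar_mem_XS]

theorem update_none_xvar (ρ : VV n m → D) (i : Fin n) :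
    Function.update ρ none d (xvar i) = ρ (xvar i) :=
  Function.update_of_ne (by simp [xvar]) _ _

theorem not_guardAt_var_xvar (i : Fin n) : ¬ guardAt u (u.var (xvar i)) :=
  fun h => h i rfl

theorem emptyGSign_of_isEq_false (he : a.isEq = false) : emptyGSign a = false := by
  cases a <;> simp_all [Atom.isEq, emptyGSign]

theorem emptyExtSign_of_isEq_false [DecidableEq 𝒜] [DecidableEq ℱ] (he : a.isEq = false) :
    emptyExtSign a = false := by
  cases a <;> simp_all [Atom.isEq, emptyExtSign]

theorem Atom.holdsAt_congr_of_isEq (he : a.isEq = true) (u' : Env (𝒜 ⊕ Fin 2) ℱ (VV n m) D)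
    (ρ : VV n m → D) : a.holdsAt u ρ ↔ a.holdsAt u' ρ := by
  cases a <;> simp_all [Atom.holdsAt, Atom.isEq]

theorem Atom.holdsAt_ext_of_isEq (ha : isExtAtom (XS n m) none a = true) (he : a.isEq = true)
    (hg : guardAt u d) : a.holdsAt u (Function.update u.var none d) ↔ a = .eq none none := by
  cases a with
  | eq v w =>
    simp only [isExtAtom_iff, Atom.varset, Finset.insert_subset_iff, Finset.singleton_subset_iff,
      Finset.mem_insert, Finset.mem_singleton, mem_XS_iff] at ha
    obtain ⟨⟨hv | ⟨i, rfl⟩, hw | ⟨j, rfl⟩⟩, hx⟩ := ha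
    · simp [Atom.holdsAt, hv, hw]
    · subst hv
      simpa [Atom.holdsAt, update_none_xvar, xvar] using hg j
    · subst hw
      simpa [Atom.holdsAt, update_none_xvar, xvar, eq_comm] using hg i
    · simp [xvar] at hx
  | _ => simp [Atom.isEq] at he

variable [Fintype 𝒜] [Fintype ℱ]

theorem guardAt_of_extTruth {τ : Atom 𝒜 ℱ (VV n m) → Bool}
    (hτ : extSignB (XS n m) none τ = true) (h : extTruth u d τ) : guardAt u d := by
  intro i hd
  have := h _ (isExtAtom_eq_none_xvar i)
  simp [(extSignB_iff.1 hτ).2.1 _ (xvar_mem_XS i), Atom.holdsAt, update_none_xvar, hd] at this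

theorem extTruth_unique {τ₁ τ₂ : Atom 𝒜 ℱ (VV n m) → Bool}
    (hτ₁ : extSignB (XS n m) none τ₁ = true) (hτ₂ : extSignB (XS n m) none τ₂ = true)
    (h₁ : extTruth u d τ₁) (h₂ : extTruth u d τ₂) : τ₁ = τ₂ := by
  funext a
  cases ha : isExtAtom (XS n m) none a
  · rw [(extSignB_iff.1 hτ₁).2.2 a ha, (extSignB_iff.1 hτ₂).2.2 a ha]
  · exact Bool.eq_iff_iff.2 ((h₁ a ha).symm.trans (h₂ a ha))

theorem exists_extTruth [DecidableEq 𝒜] [DecidableEq ℱ] (hg : guardAt u d) :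
    ∃ τ ∈ extSigns 𝒜 ℱ (XS n m) none, extTruth u d τ := by
  classical
  refine ⟨fun a => isExtAtom (XS n m) none a &&
      decide (a.holdsAt u (Function.update u.var none d)),
    mem_extSigns.2 (extSignB_iff.2 ⟨?_, fun v hv => ?_, fun a ha => by simp [ha]⟩),
    fun a ha => by simp [ha]⟩
  · simp [isExtAtom_iff, Atom.varset, Atom.holdsAt]
  · obtain ⟨i, rfl⟩ := mem_XS_iff.1 hv
    have hi := hg i
    simp [Atom.holdsAt, update_none_xvar, hi, Ne.symm hi]

theorem injOn_var_of_gccatTruth {σ : Atom 𝒜 ℱ (VV n m) → Bool}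
    (hσ : gccatSignB (XS n m) σ = true) (h : gccatTruth u σ) : Set.InjOn u.var (XS n m) := by
  intro v hv w hw hvw
  have hσvw := (h (.eq v w)
    (Finset.insert_subset_iff.2 ⟨hv, Finset.singleton_subset_iff.2 hw⟩)).1 hvw
  simp only [gccatSignB, Bool.and_eq_true, List.all_eq_true, Finset.mem_toList] at hσ
  simpa [hσvw] using hσ.1 v hv w hw

end ExtensionTypes

section Ownership

variable {𝒜 ℱ D : Type} {n m : ℕ} {u : Env (𝒜 ⊕ Fin 2) ℱ (VV n m) D} {S : Set D} {d : D}
  {mk : Finset (Fin 2)} {τ : Atom 𝒜 ℱ (VV n m) → Bool}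

open Classical in
/-- With this owner of binary cells, every literal of an extension at a `d` outside the tuple
is owned by `d`, and every literal over the tuple by a tuple element. -/
noncomputable def cellOwner (u : Env (𝒜 ⊕ Fin 2) ℱ (VV n m) D) (d₁ d₂ : D) : D :=
  if guardAt u d₁ then d₁ else d₂

noncomputable abbrev Env.owned (u : Env (𝒜 ⊕ Fin 2) ℱ (VV n m) D) (S : Set D) :
    Env (𝒜 ⊕ Fin 2) ℱ (VV n m) D :=
  u.restrict (cellOwner u) S

/-- The elements counted by a conjunct `oneNum mk τ`. -/
def markedRealizers (u : Env (𝒜 ⊕ Fin 2) ℱ (VV n m) D) (mk : Finset (Fin 2))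
    (τ : Atom 𝒜 ℱ (VV n m) → Bool) : Set D :=
  {d | guardAt u d ∧ extTruth u d τ ∧ markTruth u d mk}

theorem Env.owned_var (u : Env (𝒜 ⊕ Fin 2) ℱ (VV n m) D) (S : Set D) :
    (u.owned S).var = u.var :=
  rfl

theorem Env.split_owned_of_subset {T : Set D} (hT : T ⊆ S) :
    (u.owned S).Split (u.owned T) (u.owned (S \ T)) := by
  have := u.split_restrict_union (cellOwner u) (Set.disjoint_sdiff_right (s := T) (t := S))
  rwa [Set.union_sdiff_cancel hT] at this

theorem cellOwner_of_guardAt (h : guardAt u d) (d' : D) : cellOwner u d d' = d :=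
  if_pos h

theorem cellOwner_var_xvar (i : Fin n) (d' : D) : cellOwner u (u.var (xvar i)) d' = d' :=
  if_neg (not_guardAt_var_xvar i)

theorem holdsAt_owned_ext {a : Atom 𝒜 ℱ (VV n m)} (ha : isExtAtom (XS n m) none a = true)
    (hg : guardAt u d) :
    a.holdsAt (u.owned S) (Function.update u.var none d) ↔
      a.holdsAt u (Function.update u.var none d) ∧ (a.isEq = false → d ∈ S) := by
  cases a with
  | un A v =>
    obtain ⟨-, rfl⟩ : _ ∧ none = v := by simpa [isExtAtom_iff, Atom.varset] using ha
    simp [Atom.holdsAt, Atom.isEq, Env.restrict]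
  | bin f v w =>
    simp only [isExtAtom_iff, Atom.varset, Finset.insert_subset_iff, Finset.singleton_subset_iff,
      Finset.mem_insert, Finset.mem_singleton, mem_XS_iff] at ha
    obtain ⟨⟨hv | ⟨i, rfl⟩, -⟩, hx⟩ := ha
    · subst hv
      simp [Atom.holdsAt, Atom.isEq, Env.restrict, cellOwner_of_guardAt hg]
    · obtain rfl : w = none := by simpa [xvar, eq_comm] using hx
      simp [Atom.holdsAt, Atom.isEq, Env.restrict, update_none_xvar, cellOwner_var_xvar]
  | eq v w => simp [Atom.holdsAt, Atom.isEq]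

theorem exists_holdsAt_owned_tuple_iff {a : Atom 𝒜 ℱ (VV n m)} (ha : a.varset ⊆ XS n m)
    (hne : a.isEq = false) :
    ∃ i, (a.holdsAt (u.owned S) u.var ↔ a.holdsAt u u.var ∧ u.var (xvar i) ∈ S) := by
  cases a with
  | un A v =>
    obtain ⟨i, rfl⟩ := mem_XS_iff.1 (by simpa [Atom.varset] using ha)
    exact ⟨i, Iff.rfl⟩
  | bin f v w =>
    simp only [Atom.varset, Finset.insert_subset_iff, Finset.singleton_subset_iff,
      mem_XS_iff] at ha
    obtain ⟨⟨i, rfl⟩, ⟨j, rfl⟩⟩ := ha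
    exact ⟨j, by simp [Atom.holdsAt, Env.restrict, cellOwner_var_xvar]⟩
  | eq v w => simp [Atom.isEq] at hne

theorem extTruth_owned (hg : guardAt u d) (hd : d ∈ S) :
    extTruth (u.owned S) d τ ↔ extTruth u d τ := by
  refine forall₂_congr fun a ha => ?_
  rw [Env.owned_var, holdsAt_owned_ext ha hg]
  simp [hd]

theorem markTruth_owned (hd : d ∈ S) : markTruth (u.owned S) d mk ↔ markTruth u d mk :=
  forall_congr' fun _ => iff_congr (and_iff_left hd) Iff.rfl

theorem allEmptyAt_owned [DecidableEq 𝒜] [DecidableEq ℱ] (hg : guardAt u d) (hd : d ∉ S) :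
    allEmptyAt (u.owned S) d := by
  refine ⟨fun a ha => ?_, fun q => by simp [Env.restrict, hd]⟩
  rw [Env.owned_var, holdsAt_owned_ext ha hg]
  cases he : a.isEq
  · simp [hd, emptyExtSign_of_isEq_false he]
  · simp [Atom.holdsAt_ext_of_isEq ha he hg, emptyExtSign]

theorem gccatTruth_owned_emptyGSign (hinj : Set.InjOn u.var (XS n m))
    (hS : ∀ d ∈ S, guardAt u d) : gccatTruth (u.owned S) emptyGSign := by
  intro a ha
  cases he : a.isEq
  · obtain ⟨i, hi⟩ := exists_holdsAt_owned_tuple_iff (u := u) (S := S) ha he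
    rw [Env.owned_var, hi, emptyGSign_of_isEq_false he]
    simpa using fun _ hi' => not_guardAt_var_xvar i (hS _ hi')
  · cases a with
    | eq v w =>
      simp only [Atom.varset, Finset.insert_subset_iff, Finset.singleton_subset_iff] at ha
      simp [Atom.holdsAt, emptyGSign, Env.restrict, hinj.eq_iff ha.1 ha.2]
    | _ => simp [Atom.isEq] at he

theorem gccatTruth_owned_compl {σ : Atom 𝒜 ℱ (VV n m) → Bool} :
    gccatTruth (u.owned {d | guardAt u d}ᶜ) σ ↔ gccatTruth u σ := by
  refine forall₂_congr fun a ha => iff_congr ?_ Iff.rfl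
  cases he : a.isEq
  · obtain ⟨i, hi⟩ := exists_holdsAt_owned_tuple_iff (u := u) (S := {d | guardAt u d}ᶜ) ha he
    rw [Env.owned_var, hi]
    exact and_iff_left (not_guardAt_var_xvar i)
  · exact Atom.holdsAt_congr_of_isEq he _ _

theorem markedRealizers_owned (hmk : mk.Nonempty) (hS : S ⊆ markedRealizers u mk τ) :
    markedRealizers (u.owned S) mk τ = S := by
  obtain ⟨q, hq⟩ := hmk
  refine Set.ext fun d => ⟨fun ⟨_, _, hM⟩ => ((hM q).2 hq).2, fun hd => ?_⟩
  obtain ⟨hg, hT, hM⟩ := hS hd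
  exact ⟨hg, (extTruth_owned hg hd).2 hT, (markTruth_owned hd).2 hM⟩

theorem markedRealizers_eq [Fintype 𝒜] [Fintype ℱ] (hmark : ∀ d, guardAt u d → markTruth u d mk)
    (hτ : extSignB (XS n m) none τ = true) : markedRealizers u mk τ = {d | extTruth u d τ} :=
  Set.ext fun d => ⟨fun h => h.2.1, fun h =>
    ⟨guardAt_of_extTruth hτ h, h, hmark d (guardAt_of_extTruth hτ h)⟩⟩

end Ownership

section XstrMultisets

variable {𝒜 ℱ : Type} {n m : ℕ} {mk : Finset (Fin 2)} {τ : Atom 𝒜 ℱ (VV n m) → Bool}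
  {γ : (Atom 𝒜 ℱ (VV n m) → Bool) → CQ} {T : Finset (Atom 𝒜 ℱ (VV n m) → Bool)}

/-- The number of `oneNum` conjuncts in `xstrBlocks mk τ q`. -/
def CQ.bound : CQ → ℕ
  | .exact k => k
  | .atLeast k => k

theorem xstrBlocks_atLeast (k : ℕ) :
    xstrBlocks mk τ (.atLeast k) = xstrBlocks mk τ (.exact k) + {Blk.anyNum mk τ} := by
  rw [xstrBlocks, xstrBlocks, add_assoc, Multiset.singleton_add, Multiset.insert_eq_cons]

theorem mem_xstrBlocks {b : Blk 𝒜 ℱ n m} {q : CQ} (hb : b ∈ xstrBlocks mk τ q) :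
    b = .empe ∨ b = .oneNum mk τ ∨ (b = .anyNum mk τ ∧ ∃ k, q = .atLeast k) := by
  cases q <;>
    simp only [xstrBlocks, Multiset.mem_add, Multiset.mem_singleton, Multiset.insert_eq_cons,
      Multiset.mem_cons, Multiset.mem_replicate] at hb <;>
    aesop

theorem anyNum_notMem_sum_xstrBlocks {k : ℕ} (hk : γ τ = .exact k) :
    Blk.anyNum mk τ ∉ ∑ τ' ∈ T, xstrBlocks mk τ' (γ τ') := by
  intro hb
  obtain ⟨τ', -, hb⟩ := Multiset.mem_sum.1 hb
  rcases mem_xstrBlocks hb with h | h | ⟨h, k', hk'⟩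
  · cases h
  · cases h
  · cases h
    cases hk.symm.trans hk'

open scoped Classical in
theorem count_oneNum_sum_xstrBlocks (hτ : τ ∈ T) :
    (∑ τ' ∈ T, xstrBlocks mk τ' (γ τ')).count (.oneNum mk τ) = (γ τ).bound := by
  rw [Multiset.count_sum', Finset.sum_eq_single_of_mem τ hτ fun τ' _ hne => ?_]
  · cases γ τ <;> simp [xstrBlocks, CQ.bound]
  · cases γ τ' <;> simp [xstrBlocks, Multiset.count_replicate, hne]

variable [Fintype 𝒜] [Fintype ℱ]

def Blk.IsXstr (mk : Finset (Fin 2)) (b : Blk 𝒜 ℱ n m) : Prop :=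
  b = .empe ∨ ∃ τ, extSignB (XS n m) none τ = true ∧ (b = .oneNum mk τ ∨ b = .anyNum mk τ)

theorem isXstr_of_mem_sum_xstrBlocks (hT : ∀ τ ∈ T, extSignB (XS n m) none τ = true) :
    ∀ b ∈ ∑ τ ∈ T, xstrBlocks mk τ (γ τ), b.IsXstr mk := by
  intro b hb
  obtain ⟨τ, hτ, hb⟩ := Multiset.mem_sum.1 hb
  rcases mem_xstrBlocks hb with rfl | rfl | ⟨rfl, -⟩
  exacts [Or.inl rfl, Or.inr ⟨τ, hT τ hτ, Or.inl rfl⟩, Or.inr ⟨τ, hT τ hτ, Or.inr rfl⟩]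

end XstrMultisets

section Forward

variable {𝒜 ℱ D : Type} [DecidableEq 𝒜] [DecidableEq ℱ] {n m : ℕ}
  {u : Env (𝒜 ⊕ Fin 2) ℱ (VV n m) D} {S : Set D} {mk : Finset (Fin 2)}
  {τ : Atom 𝒜 ℱ (VV n m) → Bool}

theorem sem_kstr_owned {σ : Atom 𝒜 ℱ (VV n m) → Bool} (h : gccatTruth u σ) :
    (Blk.kstr σ).sem (u.owned {d | guardAt u d}ᶜ) :=
  ⟨gccatTruth_owned_compl.2 h, fun _ hg => allEmptyAt_owned hg (not_not.2 hg)⟩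

variable (hinj : Set.InjOn u.var (XS n m))
include hinj

theorem sem_empe_owned : Blk.empe.sem (u.owned ∅) :=
  ⟨gccatTruth_owned_emptyGSign hinj fun _ h => h.elim, fun _ hg => allEmptyAt_owned hg id⟩

theorem sem_anyNum_owned (hS : S ⊆ markedRealizers u mk τ) :
    (Blk.anyNum mk τ).sem (u.owned S) := by
  refine ⟨gccatTruth_owned_emptyGSign hinj fun d hd => (hS hd).1, fun d hg => ?_⟩
  by_cases hd : d ∈ S
  · obtain ⟨-, hT, hM⟩ := hS hd
    exact Or.inl ⟨(extTruth_owned (u := u) hg hd).2 hT, (markTruth_owned hd).2 hM⟩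
  · exact Or.inr (allEmptyAt_owned hg hd)

theorem sem_oneNum_owned (hmk : mk.Nonempty) (hS : S ⊆ markedRealizers u mk τ)
    (hcard : S.ncard = 1) : (Blk.oneNum mk τ).sem (u.owned S) :=
  ⟨sem_anyNum_owned hinj hS, (congrArg Set.ncard (markedRealizers_owned hmk hS)).trans hcard⟩

variable [Finite D] (hmk : mk.Nonempty)
include hmk

theorem semM_xstrBlocks_exact_owned {k : ℕ} :
    ∀ {S : Set D}, S ⊆ markedRealizers u mk τ → S.ncard = k →
      semM (xstrBlocks mk τ (.exact k)) (u.owned S) := by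
  induction k with
  | zero =>
    intro S _ hcard
    rw [(Set.ncard_eq_zero (Set.toFinite S)).1 hcard, xstrBlocks, Multiset.replicate_zero,
      zero_add, semM_singleton]
    exact sem_empe_owned hinj
  | succ k ih =>
    intro S hS hcard
    obtain ⟨d, hd⟩ := Set.nonempty_of_ncard_ne_zero (hcard.trans_ne k.succ_ne_zero)
    rw [xstrBlocks, Multiset.replicate_succ, Multiset.cons_add, semM_cons]
    refine ⟨_, _, Env.split_owned_of_subset (Set.singleton_subset_iff.2 hd),
      sem_oneNum_owned hinj hmk (Set.singleton_subset_iff.2 (hS hd)) (Set.ncard_singleton d),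
      ih (Set.sdiff_subset.trans hS) ?_⟩
    rw [Set.ncard_sdiff_singleton_of_mem hd, hcard, Nat.add_sub_cancel]

theorem semM_xstrBlocks_owned (hS : S ⊆ markedRealizers u mk τ) {q : CQ}
    (hq : q.sat S.ncard) : semM (xstrBlocks mk τ q) (u.owned S) := by
  cases q with
  | exact k => exact semM_xstrBlocks_exact_owned hinj hmk hS hq
  | atLeast k =>
    obtain ⟨T, hTS, hT⟩ := Set.exists_subset_card_eq hq
    rw [xstrBlocks_atLeast, semM_add, semM_singleton]
    exact ⟨_, _, Env.split_owned_of_subset hTS,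
      semM_xstrBlocks_exact_owned hinj hmk (hTS.trans hS) hT,
      sem_anyNum_owned hinj (Set.sdiff_subset.trans hS)⟩

theorem semM_sum_xstrBlocks_owned [Fintype 𝒜] [Fintype ℱ]
    {γ : (Atom 𝒜 ℱ (VV n m) → Bool) → CQ} (T : Finset (Atom 𝒜 ℱ (VV n m) → Bool))
    (hT : ∀ τ ∈ T, extSignB (XS n m) none τ = true)
    (hγ : ∀ τ ∈ T, (γ τ).sat (markedRealizers u mk τ).ncard) :
    semM (∑ τ ∈ T, xstrBlocks mk τ (γ τ)) (u.owned (⋃ τ ∈ T, markedRealizers u mk τ)) := by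
  classical
  induction T using Finset.induction_on with
  | empty => simpa [semM_zero] using u.emp_restrict_empty (cellOwner u)
  | insert τ T hτ ih =>
    simp only [Finset.mem_insert, forall_eq_or_imp] at hT hγ
    rw [Finset.sum_insert hτ, semM_add, Finset.set_biUnion_insert]
    refine ⟨_, _, u.split_restrict_union _ ?_,
      semM_xstrBlocks_owned hinj hmk subset_rfl hγ.1, ih hT.2 hγ.2⟩
    refine Set.disjoint_left.2 fun d hd hd' => ?_
    obtain ⟨τ', hτ', hd'⟩ := Set.mem_iUnion₂.1 hd'
    obtain rfl := extTruth_unique hT.1 (hT.2 τ' hτ') hd.2.1 hd'.2.1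
    exact hτ hτ'

end Forward

section Backward

variable {𝒜 ℱ D : Type} {n m : ℕ} {u u₁ u₂ : Env (𝒜 ⊕ Fin 2) ℱ (VV n m) D} {d : D}
  {mk : Finset (Fin 2)} {τ : Atom 𝒜 ℱ (VV n m) → Bool} {q : Fin 2} {a : Atom 𝒜 ℱ (VV n m)}

theorem Atom.not_holdsAt_of_emp (hu : emp' u) (he : a.isEq = false) (ρ : VV n m → D) :
    ¬ a.holdsAt u ρ := by
  cases a with
  | un A v => exact hu.1 _ _
  | bin f v w => exact hu.2 _ _ _
  | eq v w => simp [Atom.isEq] at he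

theorem Env.Split.holdsAt_iff (hs : u.Split u₁ u₂) (he : a.isEq = false) (ρ : VV n m → D) :
    a.holdsAt u ρ ↔ a.holdsAt u₁ ρ ∨ a.holdsAt u₂ ρ := by
  cases a with
  | un A v => exact hs.un_iff _ _
  | bin f v w => exact (hs.2.2.2 _ _ _).1
  | eq v w => simp [Atom.isEq] at he

theorem Env.Split.guardAt_left_iff (hs : u.Split u₁ u₂) : guardAt u₁ d ↔ guardAt u d := by
  rw [guardAt, guardAt, hs.1]

theorem Env.Split.gccatTruth_iff (hs : u.Split u₁ u₂)
    (h₂ : ∀ a : Atom 𝒜 ℱ (VV n m), a.varset ⊆ XS n m → a.isEq = false → ¬ a.holdsAt u₂ u₂.var)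
    {σ : Atom 𝒜 ℱ (VV n m) → Bool} : gccatTruth u σ ↔ gccatTruth u₁ σ := by
  refine forall₂_congr fun a ha => iff_congr ?_ Iff.rfl
  rw [hs.1]
  cases he : a.isEq
  · rw [hs.holdsAt_iff he, or_iff_left (hs.2.1 ▸ h₂ a ha he)]
  · exact Atom.holdsAt_congr_of_isEq he _ _

variable [DecidableEq 𝒜] [DecidableEq ℱ]

theorem allEmptyAt_of_emp (hu : emp' u) (hg : guardAt u d) : allEmptyAt u d := by
  refine ⟨fun a ha => ?_, fun q => by simpa using hu.1 _ d⟩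
  cases he : a.isEq
  · simpa [emptyExtSign_of_isEq_false he] using Atom.not_holdsAt_of_emp hu he _
  · simp [Atom.holdsAt_ext_of_isEq ha he hg, emptyExtSign]

section AllEmptyRight

variable (hs : u.Split u₁ u₂) (h₂ : allEmptyAt u₂ d)
include hs h₂

theorem Env.Split.extTruth_iff : extTruth u d τ ↔ extTruth u₁ d τ := by
  refine forall₂_congr fun a ha => iff_congr ?_ Iff.rfl
  rw [hs.1]
  cases he : a.isEq
  · have h₂a := h₂.1 a ha
    rw [emptyExtSign_of_isEq_false he, hs.2.1, Bool.false_eq_true, iff_false] at h₂a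
    rw [hs.holdsAt_iff he, or_iff_left h₂a]
  · exact Atom.holdsAt_congr_of_isEq he _ _

theorem Env.Split.markTruth_iff : markTruth u d mk ↔ markTruth u₁ d mk :=
  forall_congr' fun q => by
    rw [hs.un_iff, or_iff_left fun h => Finset.notMem_empty q ((h₂.2 q).1 h)]

theorem Env.Split.allEmptyAt_iff : allEmptyAt u d ↔ allEmptyAt u₁ d :=
  and_congr (hs.extTruth_iff h₂) (hs.markTruth_iff h₂)

theorem Env.Split.mem_markedRealizers_iff :
    d ∈ markedRealizers u mk τ ↔ d ∈ markedRealizers u₁ mk τ :=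
  and_congr hs.guardAt_left_iff.symm (and_congr (hs.extTruth_iff h₂) (hs.markTruth_iff h₂))

end AllEmptyRight

theorem Env.Split.markedRealizers_eq_right (hs : u.Split u₁ u₂)
    (h₁ : ∀ d, guardAt u₁ d → allEmptyAt u₁ d) :
    markedRealizers u mk τ = markedRealizers u₂ mk τ :=
  Set.ext fun d => by
    by_cases hg : guardAt u d
    · exact hs.symm.mem_markedRealizers_iff (h₁ d (hs.guardAt_left_iff.2 hg))
    · exact iff_of_false (fun hd => hg hd.1) fun hd => hg (hs.symm.guardAt_left_iff.1 hd.1)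

def Env.UnmarkedEmpty (u : Env (𝒜 ⊕ Fin 2) ℱ (VV n m) D) (q : Fin 2) : Prop :=
  ∀ d, guardAt u d → ¬ u.un (Sum.inr q) d → allEmptyAt u d

theorem Env.Split.unmarkedEmpty (hs : u.Split u₁ u₂) (h₁ : u₁.UnmarkedEmpty q)
    (h₂ : u₂.UnmarkedEmpty q) : u.UnmarkedEmpty q := fun d hg hq =>
  (hs.allEmptyAt_iff (h₂ d (hs.symm.guardAt_left_iff.2 hg)
    fun h => hq ((hs.un_iff _ _).2 (Or.inr h)))).2
    (h₁ d (hs.guardAt_left_iff.2 hg) fun h => hq ((hs.un_iff _ _).2 (Or.inl h)))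

theorem Env.Split.mem_markedRealizers_iff_of_marked (hs : u.Split u₁ u₂)
    (h₂ : u₂.UnmarkedEmpty q) (hg : guardAt u d) (hq : u₁.un (Sum.inr q) d) :
    d ∈ markedRealizers u mk τ ↔ d ∈ markedRealizers u₁ mk τ :=
  hs.mem_markedRealizers_iff (h₂ d (hs.symm.guardAt_left_iff.2 hg) (hs.not_un_right hq))

theorem Env.Split.markedRealizers_eq_union (hs : u.Split u₁ u₂) (h₁ : u₁.UnmarkedEmpty q)
    (h₂ : u₂.UnmarkedEmpty q) (hq : q ∈ mk) :
    markedRealizers u mk τ = markedRealizers u₁ mk τ ∪ markedRealizers u₂ mk τ ∧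
      Disjoint (markedRealizers u₁ mk τ) (markedRealizers u₂ mk τ) := by
  refine ⟨Set.ext fun d => ⟨fun hd => ?_, fun hd => ?_⟩, Set.disjoint_left.2
    fun d hd₁ hd₂ => hs.not_un_right ((hd₁.2.2 q).2 hq) ((hd₂.2.2 q).2 hq)⟩
  · rcases (hs.un_iff _ _).1 ((hd.2.2 q).2 hq) with hm | hm
    · exact Or.inl ((hs.mem_markedRealizers_iff_of_marked h₂ hd.1 hm).1 hd)
    · exact Or.inr ((hs.symm.mem_markedRealizers_iff_of_marked h₁ hd.1 hm).1 hd)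
  · rcases hd with hd | hd
    · exact (hs.mem_markedRealizers_iff_of_marked h₂ (hs.guardAt_left_iff.1 hd.1)
        ((hd.2.2 q).2 hq)).2 hd
    · exact (hs.symm.mem_markedRealizers_iff_of_marked h₁ (hs.symm.guardAt_left_iff.1 hd.1)
        ((hd.2.2 q).2 hq)).2 hd

end Backward

section XstrBlocks

open scoped Classical

variable {𝒜 ℱ D : Type} [Fintype 𝒜] [DecidableEq 𝒜] [Fintype ℱ] [DecidableEq ℱ] {n m : ℕ}
  {u : Env (𝒜 ⊕ Fin 2) ℱ (VV n m) D} {mk : Finset (Fin 2)} {τ : Atom 𝒜 ℱ (VV n m) → Bool}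
  {q : Fin 2} {b : Blk 𝒜 ℱ n m} {s : Multiset (Blk 𝒜 ℱ n m)}

theorem Blk.IsXstr.gccatTruth_emptyGSign (hb : b.IsXstr mk) (h : b.sem u) :
    gccatTruth u emptyGSign := by
  rcases hb with rfl | ⟨τ, -, rfl | rfl⟩
  exacts [h.1, h.1.1, h.1]

theorem Blk.IsXstr.allEmptyAt_or {d : D} (hb : b.IsXstr mk) (h : b.sem u) (hg : guardAt u d) :
    allEmptyAt u d ∨ ∃ τ, extSignB (XS n m) none τ = true ∧
      (b = .oneNum mk τ ∨ b = .anyNum mk τ) ∧ extTruth u d τ ∧ markTruth u d mk := by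
  rcases hb with rfl | ⟨τ, hτ, rfl | rfl⟩
  · exact Or.inl (h.2 d hg)
  · exact (h.1.2 d hg).symm.imp_right fun h' => ⟨τ, hτ, Or.inl rfl, h'⟩
  · exact (h.2 d hg).symm.imp_right fun h' => ⟨τ, hτ, Or.inr rfl, h'⟩

theorem Blk.IsXstr.unmarkedEmpty (hb : b.IsXstr mk) (h : b.sem u) (hq : q ∈ mk) :
    u.UnmarkedEmpty q := fun _ hg hm =>
  (hb.allEmptyAt_or h hg).resolve_right fun ⟨_, _, _, _, hM⟩ => hm ((hM q).2 hq)

theorem Blk.IsXstr.ncard_markedRealizers (hb : b.IsXstr mk) (h : b.sem u)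
    (hτ : extSignB (XS n m) none τ = true) (hq : q ∈ mk) (hne : b ≠ .anyNum mk τ) :
    (markedRealizers u mk τ).ncard = if Blk.oneNum mk τ = b then 1 else 0 := by
  split_ifs with hone
  · subst hone
    exact h.2
  · suffices markedRealizers u mk τ = ∅ by rw [this, Set.ncard_empty]
    refine Set.eq_empty_of_forall_notMem fun _ ⟨hg, hT, hM⟩ => ?_
    rcases hb.allEmptyAt_or h hg with hE | ⟨τ', hτ', hb', hT', -⟩
    · exact Finset.notMem_empty q ((hE.2 q).1 ((hM q).2 hq))
    · obtain rfl := extTruth_unique hτ' hτ hT' hT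
      rcases hb' with rfl | rfl
      exacts [hone rfl, hne rfl]

variable (hs : ∀ b ∈ s, b.IsXstr mk)
include hs

theorem unmarkedEmpty_of_semM (h : semM s u) (hq : q ∈ mk) : u.UnmarkedEmpty q := by
  induction s using Multiset.induction_on generalizing u with
  | empty =>
    rw [semM_zero] at h
    exact fun d hg _ => allEmptyAt_of_emp h hg
  | cons b s ih =>
    rw [Multiset.forall_mem_cons] at hs
    rw [semM_cons] at h
    obtain ⟨u₁, u₂, hsp, h₁, h₂⟩ := h
    exact hsp.unmarkedEmpty (hs.1.unmarkedEmpty h₁ hq) (ih hs.2 h₂)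

theorem not_holdsAt_tuple_of_semM (h : semM s u) {a : Atom 𝒜 ℱ (VV n m)}
    (ha : a.varset ⊆ XS n m) (he : a.isEq = false) : ¬ a.holdsAt u u.var := by
  induction s using Multiset.induction_on generalizing u with
  | empty =>
    rw [semM_zero] at h
    exact Atom.not_holdsAt_of_emp h he _
  | cons b s ih =>
    rw [Multiset.forall_mem_cons] at hs
    rw [semM_cons] at h
    obtain ⟨u₁, u₂, hsp, h₁, h₂⟩ := h
    have h₁a := hs.1.gccatTruth_emptyGSign h₁ a ha
    rw [emptyGSign_of_isEq_false he, hsp.1, Bool.false_eq_true, iff_false] at h₁a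
    rw [hsp.holdsAt_iff he, not_or]
    exact ⟨h₁a, hsp.2.1 ▸ ih hs.2 h₂⟩

/-- Each `oneNum mk τ` conjunct claims one marked realizer of `τ`, and only an `anyNum mk τ`
conjunct can claim more. -/
theorem count_oneNum_le_ncard_markedRealizers [Finite D] (h : semM s u)
    (hτ : extSignB (XS n m) none τ = true) (hq : q ∈ mk) :
    s.count (.oneNum mk τ) ≤ (markedRealizers u mk τ).ncard ∧
      (Blk.anyNum mk τ ∉ s → (markedRealizers u mk τ).ncard = s.count (.oneNum mk τ)) := by
  induction s using Multiset.induction_on generalizing u with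
  | empty =>
    rw [semM_zero] at h
    suffices markedRealizers u mk τ = ∅ by simp [this]
    exact Set.eq_empty_of_forall_notMem fun _ ⟨_, _, hM⟩ => h.1 _ _ ((hM q).2 hq)
  | cons b s ih =>
    rw [Multiset.forall_mem_cons] at hs
    rw [semM_cons] at h
    obtain ⟨u₁, u₂, hsp, h₁, h₂⟩ := h
    obtain ⟨hM, hdisj⟩ := hsp.markedRealizers_eq_union (mk := mk) (τ := τ)
      (hs.1.unmarkedEmpty h₁ hq) (unmarkedEmpty_of_semM hs.2 h₂ hq) hq
    obtain ⟨ih₁, ih₂⟩ := ih hs.2 h₂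
    rw [hM, Set.ncard_union_eq hdisj, Multiset.count_cons]
    by_cases hb : b = .anyNum mk τ
    · subst hb
      simp [ih₁, le_add_left]
    · rw [hs.1.ncard_markedRealizers h₁ hτ hq hb]
      refine ⟨by omega, fun hn => ?_⟩
      rw [ih₂ fun hn' => hn (Multiset.mem_cons_of_mem hn'), add_comm]

end XstrBlocks

section Translation

variable {𝒜 ℱ D : Type} [Fintype 𝒜] [DecidableEq 𝒜] [Fintype ℱ] [DecidableEq ℱ] {n m : ℕ}
  [Finite D] {u : Env (𝒜 ⊕ Fin 2) ℱ (VV n m) D} {mk : Finset (Fin 2)} {c : CStar 𝒜 ℱ n m}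

theorem strBlocks_eq_sum (mk : Finset (Fin 2)) (c : CStar 𝒜 ℱ n m) :
    strBlocks mk c = Blk.kstr c.σ ::ₘ
      ∑ τ ∈ (extSigns 𝒜 ℱ (XS n m) none).toFinset, xstrBlocks mk τ (c.γ τ) := by
  rw [strBlocks, ← List.sum_toFinset _ nodup_extSigns]

theorem extSignB_of_mem_toFinset {τ : Atom 𝒜 ℱ (VV n m) → Bool}
    (hτ : τ ∈ (extSigns 𝒜 ℱ (XS n m) none).toFinset) : extSignB (XS n m) none τ = true :=
  mem_extSigns.1 (List.mem_toFinset.1 hτ)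

variable (hmk : mk.Nonempty) (hmark : ∀ d, guardAt u d → markTruth u d mk)
include hmk hmark

theorem semM_strBlocks_of_realized (hc : c.WF) (h : c.Realized u) :
    semM (strBlocks mk c) u := by
  have hguard : ⋃ τ ∈ (extSigns 𝒜 ℱ (XS n m) none).toFinset, markedRealizers u mk τ =
      {d | guardAt u d} := by
    ext d
    simp only [Set.mem_iUnion, Set.mem_ofPred_eq, List.mem_toFinset, exists_prop]
    refine ⟨fun ⟨_, _, hd⟩ => hd.1, fun hg => ?_⟩
    obtain ⟨τ, hτ, hd⟩ := exists_extTruth hg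
    exact ⟨τ, hτ, hg, hd, hmark d hg⟩
  have hγ : ∀ τ ∈ (extSigns 𝒜 ℱ (XS n m) none).toFinset,
      (c.γ τ).sat (markedRealizers u mk τ).ncard := fun τ hτ => by
    rw [markedRealizers_eq hmark (extSignB_of_mem_toFinset hτ)]
    exact h.2 τ (List.mem_toFinset.1 hτ)
  rw [strBlocks_eq_sum, semM_cons, ← u.restrict_univ (cellOwner u),
    ← Set.compl_union_self {d | guardAt u d}]
  refine ⟨_, _, u.split_restrict_union _ disjoint_compl_left, sem_kstr_owned h.1, ?_⟩
  rw [← hguard]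
  exact semM_sum_xstrBlocks_owned (injOn_var_of_gccatTruth hc h.1) hmk _
    (fun _ => extSignB_of_mem_toFinset) hγ

theorem realized_of_semM_strBlocks (h : semM (strBlocks mk c) u) : c.Realized u := by
  obtain ⟨q, hq⟩ := hmk
  rw [strBlocks_eq_sum, semM_cons] at h
  obtain ⟨u₁, u₂, hs, ⟨hσ, hk⟩, hR⟩ := h
  have hX := isXstr_of_mem_sum_xstrBlocks (mk := mk) (γ := c.γ)
    fun _ => extSignB_of_mem_toFinset
  refine ⟨(hs.gccatTruth_iff fun a ha he => not_holdsAt_tuple_of_semM hX hR ha he).2 hσ,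
    fun τ hτ => ?_⟩
  replace hτ : τ ∈ (extSigns 𝒜 ℱ (XS n m) none).toFinset := List.mem_toFinset.2 hτ
  obtain ⟨hle, heq⟩ :=
    count_oneNum_le_ncard_markedRealizers hX hR (extSignB_of_mem_toFinset hτ) hq
  rw [count_oneNum_sum_xstrBlocks hτ, ← hs.markedRealizers_eq_right hk,
    markedRealizers_eq hmark (extSignB_of_mem_toFinset hτ)] at hle heq
  cases hγ : c.γ τ with
  | exact k => simpa [hγ, CQ.sat, CQ.bound] using heq (anyNum_notMem_sum_xstrBlocks hγ)
  | atLeast k => simpa [hγ, CQ.sat, CQ.bound] using hle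

theorem semM_strBlocks_iff (hc : c.WF) : semM (strBlocks mk c) u ↔ c.Realized u :=
  ⟨realized_of_semM_strBlocks hmk hmark, semM_strBlocks_of_realized hmk hmark hc⟩

end Translation

/-- **Correctness of the spatial translation of counting
stars.** If `e` is an environment for the language `L`, `C` a counting star
formula in `L`, and `m ∈ {{1}, {2}, {1,2}}` (i.e. a nonempty set of markers),
then `⟦C⟧e = ⟦str_m(C)⟧e^m`. -/
theorem str_translation_correct {𝒜 ℱ : Type}
    [Fintype 𝒜] [DecidableEq 𝒜] [Fintype ℱ] [DecidableEq ℱ] {n m : ℕ}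
    (c : CStar 𝒜 ℱ n m) (hc : c.WF) (mk : Finset (Fin 2)) (hmk : mk.Nonempty)
    (D : Type) [Finite D] (e : Env 𝒜 ℱ (VV n m) D) :
    (csFml c).Sat e ↔ strSat mk c (markEnv e mk) := by
  rw [csFml_sat_iff e mk, strSat, semM_strBlocks_iff hmk (markTruth_markEnv e mk) hc]
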